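/- arXiv:1210.2081 — 4 statements merged into one kernel-verified Lean document; each statement's English description precedes it below -/
import Mathlib

section
/- For every integer m ≥ 2, every n ∈ ℕ, and all complex numbers z₁, …, z_m with z = z₁ + ⋯ + z_m, the following identity holds: ∑_{k₁+⋯+k_m = n} ∏_{i=1}^{m} C(2kᵢ, kᵢ) q_{kᵢ}(zᵢ) = ∑_{k=0}^{n} C(2k, k) · 2^{2n-2k} · ((m-1)/2)_{n-k} / (n-k)! · q_k(z), where the sum on the left is over all m-tuples (k₁, …, k_m) of nonnegative integers summing to n. -/
/-- The Bessel polynomial `q_n(z) = ∑_{l=0}^n [C(n,l)/C(2n,l)] (2z)^l / l!`. -/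
noncomputable def besselQ (n : ℕ) (z : ℂ) : ℂ :=
  ∑ l ∈ Finset.range (n + 1),
    ((n.choose l : ℂ) / ((2 * n).choose l : ℂ)) * (2 * z) ^ l / (Nat.factorial l : ℂ)

/-- The Pochhammer symbol (rising factorial) `(a)_j = a (a+1) ⋯ (a+j-1)`. -/
noncomputable def poch (a : ℂ) (j : ℕ) : ℂ := ∏ i ∈ Finset.range j, (a + i)

/-!
Let `S_p = ∑_i C(2i+p, i) Xⁱ`. Pascal's rule gives `S_{p+1} = S_p + X S_{p+2}`, and from it
`S_p S_q = S_0 S_{p+q}`; hence `S_0 Tᵖ = Xᵖ S_p` for `T = X S_1 / S_0`. Expanding `q_k` then shows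
that `A(z) = ∑_k C(2k,k) q_k(z) Xᵏ` equals `S_0 · exp(2zT)`, so `A(x) A(y) = S_0 A(x+y)`.
As `S_0 = (1-4X)^(-1/2)`, induction on the number of factors gives
`∏ A(z_i) = (1-4X)^(-(m-1)/2) A(∑ z_i)`, and the theorem compares coefficients of `Xⁿ`, using
`(1-4X)^(-c) = ∑_j 4ʲ (c)_j / j! Xʲ`.
-/

open PowerSeries Finset

namespace PowerSeries

lemma coeff_subst_eq_sum_range {R S : Type*} [CommRing R] [CommRing S] [Algebra R S] {T : S⟦X⟧}
    (hT : constantCoeff T = 0) (f : R⟦X⟧) {n N : ℕ} (hn : n ≤ N) :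
    coeff n (f.subst T) = ∑ d ∈ range (N + 1), coeff d f • coeff n (T ^ d) := by
  rw [coeff_subst' (HasSubst.of_constantCoeff_zero' hT)]
  refine finsum_eq_sum_of_support_subset _ fun d hd => ?_
  rw [coe_range, Set.mem_Iio, Nat.lt_succ_iff]
  by_contra! hNd
  have hTd : X ^ d ∣ T ^ d := pow_dvd_pow_of_dvd (X_dvd_iff.mpr hT) d
  exact hd (by simp only [X_pow_dvd_iff.mp hTd n (by omega), smul_zero])

lemma coeff_mul_subst {R S : Type*} [CommRing R] [CommRing S] [Algebra R S] {T : S⟦X⟧}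
    (hT : constantCoeff T = 0) (f : R⟦X⟧) (g : S⟦X⟧) (n : ℕ) :
    coeff n (g * f.subst T) = ∑ d ∈ range (n + 1), coeff d f • coeff n (g * T ^ d) := by
  simp_rw [coeff_mul, smul_sum]
  rw [sum_comm]
  refine sum_congr rfl fun ij hij => ?_
  rw [coeff_subst_eq_sum_range hT f (HasAntidiagonal.antidiagonal.snd_le hij), mul_sum]
  refine sum_congr rfl fun d _ => ?_
  rw [mul_smul_comm]

lemma coeff_prod_eq_sum_antidiagonalTuple {R : Type*} [CommSemiring R] (m n : ℕ)
    (f : Fin m → R⟦X⟧) :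
    coeff n (∏ i, f i) = ∑ k ∈ Nat.antidiagonalTuple m n, ∏ i, coeff (k i) (f i) := by
  rw [coeff_prod, ← piAntidiag_univ_fin_eq_antidiagonalTuple, finsuppAntidiag, sum_map,
    ← sum_attach (piAntidiag univ n)]
  rfl

end PowerSeries

section ShiftedCentralBinom

variable (R : Type*) [CommSemiring R]

noncomputable def shiftedCentralBinomSeries (p : ℕ) : R⟦X⟧ :=
  mk fun i => ((2 * i + p).choose i : R)

variable {R}

@[simp]
lemma coeff_shiftedCentralBinomSeries (p i : ℕ) :
    coeff i (shiftedCentralBinomSeries R p) = ((2 * i + p).choose i : R) :=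
  coeff_mk _ _

@[simp]
lemma constantCoeff_shiftedCentralBinomSeries (p : ℕ) :
    constantCoeff (shiftedCentralBinomSeries R p) = 1 := by
  simp [← coeff_zero_eq_constantCoeff_apply]

lemma shiftedCentralBinomSeries_succ (p : ℕ) :
    shiftedCentralBinomSeries R (p + 1) =
      shiftedCentralBinomSeries R p + X * shiftedCentralBinomSeries R (p + 2) := by
  ext (_ | i)
  · simp
  · rw [map_add, coeff_succ_X_mul]
    simp only [coeff_shiftedCentralBinomSeries]
    rw [show 2 * (i + 1) + (p + 1) = (2 * i + (p + 2)) + 1 by ring, Nat.choose_succ_succ',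
      show 2 * i + (p + 2) = 2 * (i + 1) + p by ring]
    push_cast
    ring

lemma shiftedCentralBinomSeries_succ_mul (p q : ℕ) :
    shiftedCentralBinomSeries R (p + 1) * shiftedCentralBinomSeries R q =
      shiftedCentralBinomSeries R p * shiftedCentralBinomSeries R (q + 1) := by
  ext n
  induction n generalizing p q with
  | zero => simp [coeff_mul]
  | succ n ih =>
    -- after `S_{k+1} = S_k + X S_{k+2}` on both sides, the `X`-terms `S_{p+2} S_q` and
    -- `S_p S_{q+2}` meet at `S_{p+1} S_{q+1}` one coefficient lower
    rw [shiftedCentralBinomSeries_succ p, shiftedCentralBinomSeries_succ q, add_mul, mul_add,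
      map_add, map_add, mul_assoc, mul_left_comm _ X, coeff_succ_X_mul, coeff_succ_X_mul,
      ih (p + 1) q, ih p (q + 1)]

lemma shiftedCentralBinomSeries_mul (p q : ℕ) :
    shiftedCentralBinomSeries R p * shiftedCentralBinomSeries R q =
      shiftedCentralBinomSeries R 0 * shiftedCentralBinomSeries R (p + q) := by
  induction p generalizing q with
  | zero => simp
  | succ p ih => rw [shiftedCentralBinomSeries_succ_mul, ih, add_right_comm, add_assoc]

end ShiftedCentralBinom

lemma shiftedCentralBinomSeries_zero_mul_pow {K : Type*} [Field K] (p : ℕ) :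
    shiftedCentralBinomSeries K 0 *
        (shiftedCentralBinomSeries K 1 * (shiftedCentralBinomSeries K 0)⁻¹) ^ p =
      shiftedCentralBinomSeries K p := by
  have hS₀ : shiftedCentralBinomSeries K 0 * (shiftedCentralBinomSeries K 0)⁻¹ = 1 :=
    PowerSeries.mul_inv_cancel _ (by simp)
  induction p with
  | zero => simp
  | succ p ih =>
    rw [pow_succ, ← mul_assoc, ih, ← mul_assoc, shiftedCentralBinomSeries_mul, mul_right_comm,
      hS₀, one_mul]

lemma Ring.choose_neg_eq_poch (c : ℂ) (j : ℕ) :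
    Ring.choose (-c) j = (-1) ^ j * poch c j / j.factorial := by
  have hneg : ∏ i ∈ range j, (-c - i) = ∏ i ∈ range j, (-1 * (c + i)) :=
    prod_congr rfl fun _ _ => by ring
  rw [Ring.choose_eq_smul, ← Polynomial.aeval_eq_smeval, Polynomial.aeval_def,
    Polynomial.eval₂_eq_eval_map, descPochhammer_map, descPochhammer_eval_eq_prod_range, hneg,
    prod_mul_distrib, prod_const, card_range, poch, smul_eq_mul]
  ring

lemma four_pow_mul_poch_half_div_factorial (j : ℕ) :
    4 ^ j * poch (1 / 2) j / j.factorial = ((2 * j).choose j : ℂ) := by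
  rw [← Nat.centralBinom_eq_two_mul_choose]
  induction j with
  | zero => simp [poch]
  | succ j ih =>
    have hsucc : ((j + 1 : ℕ) : ℂ) * (j + 1).centralBinom = 2 * (2 * j + 1) * j.centralBinom :=
      mod_cast Nat.succ_mul_centralBinom_succ j
    rw [← ih] at hsucc
    have hj : ((j + 1 : ℕ) : ℂ) ≠ 0 := Nat.cast_ne_zero.mpr j.succ_ne_zero
    apply mul_left_cancel₀ hj
    rw [hsucc, poch, prod_range_succ, ← poch, Nat.factorial_succ]
    push_cast
    field_simp
    ring

noncomputable def oneSubFourXPowNeg (c : ℂ) : ℂ⟦X⟧ :=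
  rescale (-4 : ℂ) (binomialSeries ℂ (-c))

lemma coeff_oneSubFourXPowNeg (c : ℂ) (j : ℕ) :
    coeff j (oneSubFourXPowNeg c) = 4 ^ j * poch c j / j.factorial := by
  rw [oneSubFourXPowNeg, coeff_rescale, binomialSeries_coeff, smul_eq_mul, mul_one,
    Ring.choose_neg_eq_poch, ← mul_div_assoc, ← mul_assoc, ← mul_pow]
  norm_num

lemma oneSubFourXPowNeg_add (c d : ℂ) :
    oneSubFourXPowNeg (c + d) = oneSubFourXPowNeg c * oneSubFourXPowNeg d := by
  rw [oneSubFourXPowNeg, neg_add, binomialSeries_add, map_mul]; rfl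

lemma oneSubFourXPowNeg_zero : oneSubFourXPowNeg 0 = 1 := by
  simp [oneSubFourXPowNeg]

lemma oneSubFourXPowNeg_half : oneSubFourXPowNeg (1 / 2) = shiftedCentralBinomSeries ℂ 0 := by
  ext j
  rw [coeff_oneSubFourXPowNeg, four_pow_mul_poch_half_div_factorial,
    coeff_shiftedCentralBinomSeries, add_zero]

lemma choose_mul_choose_div_choose {n d : ℕ} (h : d ≤ n) :
    ((2 * n).choose n : ℂ) * ((n.choose d : ℂ) / ((2 * n).choose d : ℂ)) =
      ((2 * (n - d) + d).choose (n - d) : ℂ) := by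
  have hd : ((2 * n).choose d : ℂ) ≠ 0 := mod_cast (Nat.choose_pos (by omega)).ne'
  have hmul : (2 * n).choose n * n.choose d =
      (2 * n).choose d * (2 * (n - d) + d).choose (n - d) := by
    rw [Nat.choose_mul h, show 2 * n - d = 2 * (n - d) + d by omega]
  rw [← mul_div_assoc, div_eq_iff hd]
  exact_mod_cast hmul.trans (mul_comm _ _)

lemma choose_mul_besselQ (n : ℕ) (z : ℂ) :
    ((2 * n).choose n : ℂ) * besselQ n z =
      ∑ d ∈ range (n + 1),
        (2 * z) ^ d / d.factorial * ((2 * (n - d) + d).choose (n - d) : ℂ) := by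
  rw [besselQ, mul_sum]
  refine sum_congr rfl fun d hd => ?_
  rw [← choose_mul_choose_div_choose (Nat.lt_succ_iff.mp (mem_range.mp hd))]
  ring

noncomputable def besselQSeries (z : ℂ) : ℂ⟦X⟧ :=
  mk fun n => ((2 * n).choose n : ℂ) * besselQ n z

lemma besselQSeries_eq_mul_subst (z : ℂ) :
    besselQSeries z = shiftedCentralBinomSeries ℂ 0 *
      (rescale (2 * z) (exp ℂ)).subst
        (X * (shiftedCentralBinomSeries ℂ 1 * (shiftedCentralBinomSeries ℂ 0)⁻¹)) := by
  ext n
  rw [besselQSeries, coeff_mk, choose_mul_besselQ, coeff_mul_subst (by simp)]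
  refine sum_congr rfl fun d hd => ?_
  rw [mul_pow X, mul_left_comm (shiftedCentralBinomSeries ℂ 0),
    shiftedCentralBinomSeries_zero_mul_pow, coeff_X_pow_mul',
    if_pos (Nat.lt_succ_iff.mp (mem_range.mp hd))]
  simp [coeff_rescale, coeff_exp, div_eq_mul_inv]

lemma besselQSeries_mul (x y : ℂ) :
    besselQSeries x * besselQSeries y =
      shiftedCentralBinomSeries ℂ 0 * besselQSeries (x + y) := by
  have hT : HasSubst
      (X * (shiftedCentralBinomSeries ℂ 1 * (shiftedCentralBinomSeries ℂ 0)⁻¹)) :=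
    HasSubst.of_constantCoeff_zero' (by simp)
  rw [besselQSeries_eq_mul_subst x, besselQSeries_eq_mul_subst y, besselQSeries_eq_mul_subst,
    mul_add, ← exp_mul_exp_eq_exp_add, subst_mul hT]
  ring

lemma besselQSeries_zero : besselQSeries 0 = shiftedCentralBinomSeries ℂ 0 := by
  ext n
  rw [besselQSeries, coeff_mk, choose_mul_besselQ, sum_range_succ']
  simp

lemma prod_besselQSeries {ι : Type*} (s : Finset ι) (z : ι → ℂ) :
    ∏ i ∈ s, besselQSeries (z i) =
      oneSubFourXPowNeg ((#s - 1) / 2) * besselQSeries (∑ i ∈ s, z i) := by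
  classical
  induction s using Finset.induction_on with
  | empty =>
    rw [prod_empty, sum_empty, besselQSeries_zero, ← oneSubFourXPowNeg_half,
      ← oneSubFourXPowNeg_add]
    norm_num [oneSubFourXPowNeg_zero]
  | insert a s ha ih =>
    rw [prod_insert ha, sum_insert ha, card_insert_of_notMem ha, ih, mul_left_comm,
      besselQSeries_mul, ← oneSubFourXPowNeg_half, ← mul_assoc, ← oneSubFourXPowNeg_add]
    congr 2
    push_cast
    ring

theorem stmt_0_general (m : ℕ) (n : ℕ) (zv : Fin m → ℂ) :
    ∑ k ∈ Finset.Nat.antidiagonalTuple m n,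
      ∏ i, (((2 * k i).choose (k i) : ℂ) * besselQ (k i) (zv i)) =
    ∑ k ∈ Finset.range (n + 1),
      ((2 * k).choose k : ℂ) * 2 ^ (2 * n - 2 * k) * poch (((m : ℂ) - 1) / 2) (n - k)
        / (Nat.factorial (n - k) : ℂ) * besselQ k (∑ i, zv i) := by
  have h := congrArg (coeff n) (prod_besselQSeries univ zv)
  rw [coeff_prod_eq_sum_antidiagonalTuple, coeff_mul, card_univ, Fintype.card_fin,
    ← Nat.sum_antidiagonal_swap, Nat.sum_antidiagonal_eq_sum_range_succ_mk] at h
  simp only [besselQSeries, coeff_mk, coeff_oneSubFourXPowNeg, Prod.swap_prod_mk] at h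
  rw [h]
  refine sum_congr rfl fun k _ => ?_
  rw [show 2 * n - 2 * k = 2 * (n - k) by omega, pow_mul]
  ring

theorem stmt_0 (m : ℕ) (hm : 2 ≤ m) (n : ℕ) (zv : Fin m → ℂ) :
    ∑ k ∈ Finset.Nat.antidiagonalTuple m n,
      ∏ i, (((2 * k i).choose (k i) : ℂ) * besselQ (k i) (zv i)) =
    ∑ k ∈ Finset.range (n + 1),
      ((2 * k).choose k : ℂ) * 2 ^ (2 * n - 2 * k) * poch (((m : ℂ) - 1) / 2) (n - k)
        / (Nat.factorial (n - k) : ℂ) * besselQ k (∑ i, zv i) :=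
  stmt_0_general m n zv
end

section
/- For every integer m ≥ 2, every n ∈ ℕ, and all complex numbers z₁, …, z_m with z = z₁ + ⋯ + z_m, the reverse Bessel polynomials satisfy ∑_{k₁+⋯+k_m = n} ∏_{i=1}^{m} θ_{kᵢ}(zᵢ)/kᵢ! = ∑_{k=0}^{n} [2^{n-k} · ((m-1)/2)_{n-k} / (n-k)!] · θ_k(z)/k!, where the sum on the left is over all m-tuples (k₁, …, k_m) of nonnegative integers summing to n. -/
/-- The reverse Bessel polynomial `θ_n(z) = ((2n)!/n!) 2^{-n} q_n(z)`. -/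
noncomputable def besselTheta (n : ℕ) (z : ℂ) : ℂ :=
  ((Nat.factorial (2 * n) : ℂ) / (Nat.factorial n : ℂ)) * ((2 : ℂ) ^ n)⁻¹ * besselQ n z

/- The exponential generating function `∑ θ_n(z) Xⁿ / n!` equals `Q · exp (z (1 - √(1 - 2X)))`
with `Q = (1 - 2X)^(-1/2)`: both sides solve `(1 - 2X) Y'' = 3 Y' + z² Y`, which on coefficients
is the recurrence `θ_{n+2} = (2n + 3) θ_{n+1} + z² θ_n`, and they agree in degrees `0` and `1`.
As the exponential factor turns sums of the `zᵢ` into products, the product of the `m` generating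
functions is `Q^m · exp (z (1 - √(1 - 2X))) = (1 - 2X)^(-(m-1)/2) · ∑ θ_n(z) Xⁿ / n!`, and
`(1 - 2X)^(-a)` has coefficients `2^j (a)_j / j!`; comparing coefficients of `Xⁿ` gives the
identity. -/

open Finset PowerSeries

lemma poch_eq_eval_ascPochhammer (a : ℂ) (j : ℕ) : poch a j = (ascPochhammer ℂ j).eval a := by
  induction j with
  | zero => simp [poch]
  | succ j ih => rw [poch, prod_range_succ, ← poch, ih, ascPochhammer_succ_eval]

lemma poch_succ_left (a : ℂ) (j : ℕ) : poch a (j + 1) = a * poch (a + 1) j := by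
  rw [poch, prod_range_succ', mul_comm, Nat.cast_zero, add_zero, poch]
  congr 1
  exact prod_congr rfl fun i _ => by push_cast; ring

noncomputable def invOneSubTwoXPow (a : ℂ) : ℂ⟦X⟧ := rescale (-2) (binomialSeries ℂ (-a))

lemma coeff_invOneSubTwoXPow (a : ℂ) (n : ℕ) :
    coeff n (invOneSubTwoXPow a) = 2 ^ n * poch a n / n.factorial := by
  have h := Ring.factorial_nsmul_multichoose_eq_ascPochhammer a n
  rw [Polynomial.ascPochhammer_smeval_eq_eval, nsmul_eq_mul] at h
  rw [invOneSubTwoXPow, coeff_rescale, binomialSeries_coeff, Ring.choose_neg',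
    poch_eq_eval_ascPochhammer, ← h]
  simp only [Units.smul_def, Int.coe_negOnePow_natCast, zsmul_eq_mul, smul_eq_mul, mul_one]
  push_cast
  rw [mul_div_assoc, mul_div_cancel_left₀ _ (Nat.cast_ne_zero.2 n.factorial_ne_zero), neg_pow]
  have hsq : (-1 : ℂ) ^ n * (-1) ^ n = 1 := by rw [← mul_pow]; norm_num
  linear_combination (2 ^ n * Ring.multichoose a n) * hsq

lemma constantCoeff_invOneSubTwoXPow (a : ℂ) : constantCoeff (invOneSubTwoXPow a) = 1 := by
  rw [← coeff_zero_eq_constantCoeff_apply, coeff_invOneSubTwoXPow]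
  simp [poch]

lemma invOneSubTwoXPow_add (a b : ℂ) :
    invOneSubTwoXPow (a + b) = invOneSubTwoXPow a * invOneSubTwoXPow b := by
  rw [invOneSubTwoXPow, neg_add, binomialSeries_add, map_mul]
  rfl

lemma invOneSubTwoXPow_zero : invOneSubTwoXPow 0 = 1 := by
  simp [invOneSubTwoXPow]

lemma invOneSubTwoXPow_neg_one : invOneSubTwoXPow (-1) = 1 - 2 * X := by
  have h : PowerSeries.binomialSeries ℂ (1 : ℂ) = 1 + X := by
    simpa using binomialSeries_nat (A := ℂ) (R := ℂ) 1
  rw [invOneSubTwoXPow, neg_neg, h, map_add, map_one, rescale_X, map_neg, ← map_ofNat C 2]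
  ring

lemma invOneSubTwoXPow_pow (a : ℂ) (m : ℕ) :
    invOneSubTwoXPow a ^ m = invOneSubTwoXPow (m * a) := by
  induction m with
  | zero => simp [invOneSubTwoXPow_zero]
  | succ m ih => rw [pow_succ, ih, ← invOneSubTwoXPow_add, Nat.cast_succ, add_one_mul]

lemma derivative_invOneSubTwoXPow (a : ℂ) :
    d⁄dX ℂ (invOneSubTwoXPow a) = C (2 * a) * invOneSubTwoXPow (a + 1) := by
  ext n
  rw [coeff_derivative, coeff_C_mul, coeff_invOneSubTwoXPow, coeff_invOneSubTwoXPow,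
    poch_succ_left, Nat.factorial_succ, pow_succ]
  push_cast
  field_simp

lemma coeff_invOneSubTwoXPow_mul (a : ℂ) (Y : ℂ⟦X⟧) (n : ℕ) :
    coeff n (invOneSubTwoXPow a * Y) = ∑ k ∈ range (n + 1),
      2 ^ (n - k) * poch a (n - k) / (n - k).factorial * coeff k Y := by
  rw [mul_comm, coeff_mul, Nat.sum_antidiagonal_eq_sum_range_succ fun i j => coeff i Y * coeff j _]
  simp only [coeff_invOneSubTwoXPow, mul_comm]

lemma invOneSubTwoXPow_half_sq : invOneSubTwoXPow (1 / 2) ^ 2 = invOneSubTwoXPow 1 := by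
  rw [sq, ← invOneSubTwoXPow_add]
  norm_num

lemma derivative_invOneSubTwoXPow_half :
    d⁄dX ℂ (invOneSubTwoXPow (1 / 2)) = invOneSubTwoXPow (1 / 2) ^ 3 := by
  rw [derivative_invOneSubTwoXPow, pow_succ, invOneSubTwoXPow_half_sq, ← invOneSubTwoXPow_add]
  norm_num

lemma one_sub_two_X_mul_invOneSubTwoXPow_half_sq :
    (1 - 2 * X) * invOneSubTwoXPow (1 / 2) ^ 2 = 1 := by
  rw [← invOneSubTwoXPow_neg_one, invOneSubTwoXPow_half_sq, ← invOneSubTwoXPow_add]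
  norm_num [invOneSubTwoXPow_zero]

lemma derivative_rescale {R : Type*} [CommRing R] (r : R) (f : R⟦X⟧) :
    d⁄dX R (rescale r f) = C r * rescale r (d⁄dX R f) := by
  ext n
  rw [coeff_derivative, coeff_C_mul, coeff_rescale, coeff_rescale, coeff_derivative, pow_succ]
  ring

noncomputable def besselPhase : ℂ⟦X⟧ := 1 - invOneSubTwoXPow (-1 / 2)

noncomputable def expBesselPhase (z : ℂ) : ℂ⟦X⟧ := (rescale z (exp ℂ)).subst besselPhase

lemma constantCoeff_besselPhase : constantCoeff besselPhase = 0 := by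
  rw [besselPhase, map_sub, map_one, constantCoeff_invOneSubTwoXPow, sub_self]

lemma hasSubst_besselPhase : HasSubst besselPhase :=
  HasSubst.of_constantCoeff_zero' constantCoeff_besselPhase

lemma derivative_besselPhase : d⁄dX ℂ besselPhase = invOneSubTwoXPow (1 / 2) := by
  rw [besselPhase, map_sub, Derivation.map_one_eq_zero, derivative_invOneSubTwoXPow]
  norm_num

lemma constantCoeff_expBesselPhase (z : ℂ) : constantCoeff (expBesselPhase z) = 1 := by
  change MvPowerSeries.constantCoeff _ = 1
  rw [expBesselPhase, constantCoeff_subst hasSubst_besselPhase, finsum_eq_single _ 0]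
  · simp
  · intro d hd
    rw [map_pow, show MvPowerSeries.constantCoeff besselPhase = 0 from constantCoeff_besselPhase,
      zero_pow hd, smul_zero]

lemma expBesselPhase_zero : expBesselPhase 0 = 1 := by
  rw [expBesselPhase, rescale_zero, RingHom.comp_apply, constantCoeff_exp, subst_C, map_one]

lemma expBesselPhase_add (x y : ℂ) :
    expBesselPhase (x + y) = expBesselPhase x * expBesselPhase y := by
  rw [expBesselPhase, expBesselPhase, expBesselPhase, ← subst_mul hasSubst_besselPhase,
    exp_mul_exp_eq_exp_add]

lemma prod_expBesselPhase {ι : Type*} (s : Finset ι) (f : ι → ℂ) :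
    ∏ i ∈ s, expBesselPhase (f i) = expBesselPhase (∑ i ∈ s, f i) := by
  induction s using Finset.cons_induction with
  | empty => simp [expBesselPhase_zero]
  | cons a s ha ih => rw [prod_cons, sum_cons, ih, expBesselPhase_add]

lemma derivative_expBesselPhase (z : ℂ) :
    d⁄dX ℂ (expBesselPhase z) = C z * invOneSubTwoXPow (1 / 2) * expBesselPhase z := by
  rw [expBesselPhase, derivative_subst hasSubst_besselPhase, derivative_rescale, derivative_exp,
    subst_mul hasSubst_besselPhase, derivative_besselPhase, subst_C]
  exact mul_right_comm _ _ _

section BesselODE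

variable {R : Type*} [CommRing R]

def BesselODE (w : R) (Y : R⟦X⟧) : Prop :=
  (1 - 2 * X) * d⁄dX R (d⁄dX R Y) = 3 * d⁄dX R Y + C w * Y

lemma coeff_X_mul_derivative (f : R⟦X⟧) (n : ℕ) : coeff n (X * d⁄dX R f) = n * coeff n f := by
  cases n with
  | zero => simp
  | succ n => rw [coeff_succ_X_mul, coeff_derivative, mul_comm, Nat.cast_succ]

lemma besselODE_iff_coeff (w : R) (Y : R⟦X⟧) :
    BesselODE w Y ↔ ∀ n : ℕ, (n + 1) * (n + 2) * coeff (n + 2) Y =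
      (2 * n + 3) * (n + 1) * coeff (n + 1) Y + w * coeff n Y := by
  rw [BesselODE, PowerSeries.ext_iff]
  refine forall_congr' fun n => ?_
  rw [sub_mul, mul_assoc, one_mul, map_sub, map_add, ← map_ofNat C, coeff_C_mul, ← map_ofNat C 3,
    coeff_C_mul, coeff_C_mul, coeff_X_mul_derivative, coeff_derivative, coeff_derivative,
    coeff_derivative]
  push_cast
  constructor <;> intro h <;> linear_combination h

lemma BesselODE.eq_of_coeff_zero_one [IsDomain R] [CharZero R] {w : R} {Y Z : R⟦X⟧}
    (hY : BesselODE w Y) (hZ : BesselODE w Z) (h0 : coeff 0 Y = coeff 0 Z)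
    (h1 : coeff 1 Y = coeff 1 Z) : Y = Z := by
  rw [besselODE_iff_coeff] at hY hZ
  have key : ∀ n, coeff n Y = coeff n Z ∧ coeff (n + 1) Y = coeff (n + 1) Z := by
    intro n
    induction n with
    | zero => exact ⟨h0, h1⟩
    | succ n ih =>
      have hn : ((n : R) + 1) * (n + 2) ≠ 0 :=
        mul_ne_zero (Nat.cast_add_one_ne_zero n) (by exact_mod_cast (n + 1).succ_ne_zero)
      exact ⟨ih.2, mul_left_cancel₀ hn (by rw [hY, hZ, ih.1, ih.2])⟩
  exact PowerSeries.ext fun n => (key n).1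

end BesselODE

lemma derivative_invOneSubTwoXPow_half_mul_expBesselPhase (z : ℂ) :
    d⁄dX ℂ (invOneSubTwoXPow (1 / 2) * expBesselPhase z) =
      invOneSubTwoXPow (1 / 2) ^ 3 * expBesselPhase z +
        C z * invOneSubTwoXPow (1 / 2) ^ 2 * expBesselPhase z := by
  rw [Derivation.leibniz, derivative_expBesselPhase, derivative_invOneSubTwoXPow_half,
    smul_eq_mul, smul_eq_mul]
  ring

lemma besselODE_invOneSubTwoXPow_half_mul_expBesselPhase (z : ℂ) :
    BesselODE (z ^ 2) (invOneSubTwoXPow (1 / 2) * expBesselPhase z) := by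
  set Q := invOneSubTwoXPow (1 / 2)
  set E := expBesselPhase z
  have hE : d⁄dX ℂ E = C z * Q * E := derivative_expBesselPhase z
  have hQ : d⁄dX ℂ Q = Q ^ 3 := derivative_invOneSubTwoXPow_half
  have h2 : d⁄dX ℂ (Q ^ 3 * E + C z * Q ^ 2 * E) =
      3 * Q ^ 5 * E + 3 * C z * Q ^ 4 * E + C z ^ 2 * Q ^ 3 * E := by
    simp only [map_add, Derivation.leibniz, Derivation.leibniz_pow, hE, hQ, derivative_C,
      smul_eq_mul, nsmul_eq_mul]
    ring
  rw [BesselODE, derivative_invOneSubTwoXPow_half_mul_expBesselPhase, h2, map_pow]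
  linear_combination (3 * Q ^ 3 * E + 3 * C z * Q ^ 2 * E + C z ^ 2 * Q * E) *
    one_sub_two_X_mul_invOneSubTwoXPow_half_sq

/-- The coefficient of `z ^ j` in `θ_{j+u}(z)`. -/
noncomputable def besselThetaCoeff (j u : ℕ) : ℂ :=
  (j + 2 * u).factorial / (2 ^ u * u.factorial * j.factorial)

lemma besselTheta_eq_sum (n : ℕ) (z : ℂ) :
    besselTheta n z = ∑ l ∈ range (n + 1), besselThetaCoeff l (n - l) * z ^ l := by
  rw [besselTheta, besselQ, mul_sum]
  refine sum_congr rfl fun l hl => ?_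
  obtain ⟨u, rfl⟩ : ∃ u, n = l + u := ⟨n - l, by rw [mem_range] at hl; omega⟩
  rw [besselThetaCoeff, Nat.cast_choose ℂ (by omega : l ≤ l + u),
    Nat.cast_choose ℂ (by omega : l ≤ 2 * (l + u)), Nat.add_sub_cancel_left,
    show 2 * (l + u) - l = l + 2 * u by omega, mul_pow, pow_add]
  field_simp
  rw [div_eq_div_iff (by simp [Nat.factorial_ne_zero]) (by simp [Nat.factorial_ne_zero])]
  ring

lemma besselThetaCoeff_zero_right (j : ℕ) : besselThetaCoeff j 0 = 1 := by
  simp [besselThetaCoeff, Nat.factorial_ne_zero]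

lemma besselThetaCoeff_zero_succ (u : ℕ) :
    besselThetaCoeff 0 (u + 1) = (2 * u + 1) * besselThetaCoeff 0 u := by
  rw [besselThetaCoeff, besselThetaCoeff, zero_add, zero_add,
    show 2 * (u + 1) = 2 * u + 1 + 1 by ring, Nat.factorial_succ, Nat.factorial_succ,
    Nat.factorial_succ u, pow_succ]
  push_cast
  field_simp
  ring

lemma besselThetaCoeff_one_succ (u : ℕ) :
    besselThetaCoeff 1 (u + 1) = (2 * u + 3) * besselThetaCoeff 1 u := by
  rw [besselThetaCoeff, besselThetaCoeff, show 1 + 2 * (u + 1) = 1 + 2 * u + 1 + 1 by ring,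
    Nat.factorial_succ (1 + 2 * u + 1), Nat.factorial_succ (1 + 2 * u), Nat.factorial_succ u,
    pow_succ]
  push_cast
  field_simp
  ring

lemma besselThetaCoeff_add_two_succ (j u : ℕ) :
    besselThetaCoeff (j + 2) (u + 1) =
      (2 * (j + u) + 5) * besselThetaCoeff (j + 2) u + besselThetaCoeff j (u + 1) := by
  rw [besselThetaCoeff, besselThetaCoeff, besselThetaCoeff,
    show j + 2 + 2 * (u + 1) = j + 2 * u + 2 + 1 + 1 by ring,
    show j + 2 + 2 * u = j + 2 * u + 2 by ring, show j + 2 * (u + 1) = j + 2 * u + 2 by ring,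
    Nat.factorial_succ (j + 2 * u + 2 + 1), Nat.factorial_succ (j + 2 * u + 2),
    Nat.factorial_succ u, Nat.factorial_succ (j + 1), Nat.factorial_succ j, pow_succ]
  have hj₁ : (j : ℂ) + 1 ≠ 0 := Nat.cast_add_one_ne_zero j
  have hj₂ : (j : ℂ) + 1 + 1 ≠ 0 := by exact_mod_cast (j + 1).succ_ne_zero
  push_cast
  field_simp
  ring

lemma besselThetaCoeff_add_two_sub {n i : ℕ} (hi : i < n) :
    besselThetaCoeff (i + 2) (n - i) =
      (2 * n + 3) * besselThetaCoeff (i + 2) (n - i - 1) + besselThetaCoeff i (n - i) := by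
  obtain ⟨u, rfl⟩ : ∃ u, n = i + u + 1 := ⟨n - i - 1, by omega⟩
  rw [show i + u + 1 - i = u + 1 by omega, Nat.add_sub_cancel, besselThetaCoeff_add_two_succ]
  push_cast
  ring

lemma besselTheta_add_two (n : ℕ) (z : ℂ) :
    besselTheta (n + 2) z = (2 * n + 3) * besselTheta (n + 1) z + z ^ 2 * besselTheta n z := by
  have h₂ : besselTheta (n + 2) z =
      ∑ i ∈ range n, besselThetaCoeff (i + 2) (n - i) * z ^ (i + 2) +
        besselThetaCoeff 1 (n + 1) * z + besselThetaCoeff 0 (n + 2) + z ^ (n + 2) := by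
    rw [besselTheta_eq_sum, sum_range_succ, sum_range_succ', sum_range_succ']
    simp [besselThetaCoeff_zero_right]
  have h₁ : besselTheta (n + 1) z =
      ∑ i ∈ range n, besselThetaCoeff (i + 2) (n - i - 1) * z ^ (i + 2) +
        besselThetaCoeff 1 n * z + besselThetaCoeff 0 (n + 1) := by
    rw [besselTheta_eq_sum, sum_range_succ', sum_range_succ']
    simp [Nat.sub_sub]
  have h₀ : z ^ 2 * besselTheta n z =
      ∑ i ∈ range n, besselThetaCoeff i (n - i) * z ^ (i + 2) + z ^ (n + 2) := by
    rw [besselTheta_eq_sum, sum_range_succ, mul_add, mul_sum, Nat.sub_self,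
      besselThetaCoeff_zero_right]
    congr 1
    · exact sum_congr rfl fun i _ => by ring
    · ring
  rw [h₂, h₁, h₀, besselThetaCoeff_one_succ, besselThetaCoeff_zero_succ,
    sum_congr rfl fun i hi => by rw [besselThetaCoeff_add_two_sub (mem_range.1 hi)]]
  simp only [add_mul, sum_add_distrib, mul_add, mul_sum, mul_assoc]
  push_cast
  ring

noncomputable def besselThetaEGF (z : ℂ) : ℂ⟦X⟧ := mk fun n => besselTheta n z / n.factorial

lemma besselODE_besselThetaEGF (z : ℂ) : BesselODE (z ^ 2) (besselThetaEGF z) := by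
  rw [besselODE_iff_coeff]
  intro n
  simp only [besselThetaEGF, coeff_mk, besselTheta_add_two, Nat.factorial_succ]
  have hfac : (n.factorial : ℂ) ≠ 0 := Nat.cast_ne_zero.2 n.factorial_ne_zero
  have hn : (n : ℂ) + 1 + 1 ≠ 0 := by exact_mod_cast (n + 1).succ_ne_zero
  push_cast
  field_simp
  ring

lemma besselThetaEGF_eq (z : ℂ) :
    besselThetaEGF z = invOneSubTwoXPow (1 / 2) * expBesselPhase z := by
  refine (besselODE_besselThetaEGF z).eq_of_coeff_zero_one
    (besselODE_invOneSubTwoXPow_half_mul_expBesselPhase z) ?_ ?_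
  · simp [besselThetaEGF, besselTheta, besselQ, constantCoeff_invOneSubTwoXPow,
      constantCoeff_expBesselPhase]
  · have h := congrArg (coeff 0) (derivative_invOneSubTwoXPow_half_mul_expBesselPhase z)
    rw [coeff_derivative, zero_add, Nat.cast_zero, zero_add, mul_one] at h
    rw [h, coeff_zero_eq_constantCoeff_apply]
    simp [besselThetaEGF, besselTheta_eq_sum, sum_range_succ, besselThetaCoeff,
      constantCoeff_invOneSubTwoXPow, constantCoeff_expBesselPhase, add_comm]

lemma prod_besselThetaEGF {ι : Type*} (s : Finset ι) (f : ι → ℂ) :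
    ∏ i ∈ s, besselThetaEGF (f i) =
      invOneSubTwoXPow ((#s - 1) / 2) * besselThetaEGF (∑ i ∈ s, f i) := by
  simp only [besselThetaEGF_eq]
  rw [prod_mul_distrib, prod_const, prod_expBesselPhase, invOneSubTwoXPow_pow, ← mul_assoc,
    ← invOneSubTwoXPow_add]
  congr 2
  ring

lemma coeff_prod_fin {R : Type*} [CommRing R] {m : ℕ} (F : Fin m → R⟦X⟧) (n : ℕ) :
    coeff n (∏ i, F i) = ∑ k ∈ Nat.antidiagonalTuple m n, ∏ i, coeff (k i) (F i) := by
  rw [coeff_prod, finsuppAntidiag, sum_map, ← piAntidiag_univ_fin_eq_antidiagonalTuple]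
  exact sum_attach _ fun k : Fin m → ℕ => ∏ i, coeff (k i) (F i)

theorem stmt_9_general (m : ℕ) (n : ℕ) (zv : Fin m → ℂ) :
    ∑ k ∈ Finset.Nat.antidiagonalTuple m n,
      ∏ i, besselTheta (k i) (zv i) / (Nat.factorial (k i) : ℂ) =
    ∑ k ∈ Finset.range (n + 1),
      2 ^ (n - k) * poch (((m : ℂ) - 1) / 2) (n - k) / (Nat.factorial (n - k) : ℂ) *
        (besselTheta k (∑ i, zv i) / (Nat.factorial k : ℂ)) := by
  have h := congrArg (coeff n) (prod_besselThetaEGF univ zv)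
  rw [coeff_prod_fin, coeff_invOneSubTwoXPow_mul, card_univ, Fintype.card_fin] at h
  simpa only [besselThetaEGF, coeff_mk] using h

theorem stmt_9 (m : ℕ) (hm : 2 ≤ m) (n : ℕ) (zv : Fin m → ℂ) :
    ∑ k ∈ Finset.Nat.antidiagonalTuple m n,
      ∏ i, besselTheta (k i) (zv i) / (Nat.factorial (k i) : ℂ) =
    ∑ k ∈ Finset.range (n + 1),
      2 ^ (n - k) * poch (((m : ℂ) - 1) / 2) (n - k) / (Nat.factorial (n - k) : ℂ) *
        (besselTheta k (∑ i, zv i) / (Nat.factorial k : ℂ)) :=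
  stmt_9_general m n zv
end

section
/- For every n ∈ ℕ and every complex z, the Bessel polynomial q_n is related to the generalized Laguerre polynomial by q_n(z) = ((-1)ⁿ / C(2n, n)) · L_n^{(-2n-1)}(2z). -/
/-- The generalized Laguerre polynomial
`L_n^{(α)}(x) = ∑_{k=0}^n [(α+k+1)_{n-k} / ((n-k)! k!)] (-x)^k`. -/
noncomputable def laguerre (α : ℂ) (n : ℕ) (x : ℂ) : ℂ :=
  ∑ k ∈ Finset.range (n + 1),
    poch (α + k + 1) (n - k) / ((Nat.factorial (n - k) : ℂ) * (Nat.factorial k : ℂ)) * (-x) ^ k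


/-!
Compare the two sums term by term. At `α = -2n-1` the Laguerre coefficient of `(-x)^l` involves
the rising factorial of the negative integer `l - 2n`, which equals `(-1)^(n-l) (n-l)! C(2n-l, n-l)`;
on the Bessel side, `C(n,l) / C(2n,l) = C(2n-l, n-l) / C(2n,n)` because
`C(2n,n) C(n,l) = C(2n,l) C(2n-l,n-l)`. The signs `(-1)^n (-1)^(n-l) (-1)^l` cancel.
-/

theorem poch_neg_natCast (m j : ℕ) :
    poch (-(m : ℂ)) j = (-1) ^ j * (m.descFactorial j : ℂ) := by
  calc poch (-(m : ℂ)) j = ∏ i ∈ Finset.range j, (-1) * ((m : ℂ) - i) :=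
        Finset.prod_congr rfl fun i _ => by ring
    _ = (-1) ^ j * (descPochhammer ℂ j).eval (m : ℂ) := by
        rw [Finset.prod_mul_distrib, Finset.prod_const, Finset.card_range,
          descPochhammer_eval_eq_prod_range]
    _ = (-1) ^ j * (m.descFactorial j : ℂ) := by rw [descPochhammer_eval_eq_descFactorial]

theorem choose_div_choose_two_mul {n l : ℕ} (hl : l ≤ n) :
    (n.choose l : ℂ) / ((2 * n).choose l : ℂ)
      = ((2 * n - l).choose (n - l) : ℂ) / ((2 * n).choose n : ℂ) := by
  have hmul := congrArg (Nat.cast : ℕ → ℂ) (Nat.choose_mul (n := 2 * n) hl)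
  push_cast at hmul
  have h₁ : ((2 * n).choose l : ℂ) ≠ 0 := by exact_mod_cast (Nat.choose_pos (by omega)).ne'
  have h₂ : ((2 * n).choose n : ℂ) ≠ 0 := by exact_mod_cast (Nat.choose_pos (by omega)).ne'
  rw [div_eq_div_iff h₁ h₂]
  linear_combination hmul

theorem laguerre_coeff_neg_two_mul_sub_one {n l : ℕ} (hl : l ≤ n) :
    poch (-(2 * (n : ℂ)) - 1 + l + 1) (n - l) / ((n - l).factorial : ℂ)
      = (-1) ^ (n - l) * ((2 * n - l).choose (n - l) : ℂ) := by
  have harg : -(2 * (n : ℂ)) - 1 + l + 1 = -((2 * n - l : ℕ) : ℂ) := by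
    rw [Nat.cast_sub (by omega)]; push_cast; ring
  have hfac : ((n - l).factorial : ℂ) ≠ 0 := by exact_mod_cast (n - l).factorial_ne_zero
  rw [harg, poch_neg_natCast, Nat.descFactorial_eq_factorial_mul_choose]
  push_cast
  field_simp

theorem stmt_12 (n : ℕ) (z : ℂ) :
    besselQ n z = ((-1 : ℂ) ^ n / (((2 * n).choose n : ℕ) : ℂ)) *
      laguerre (-(2 * (n : ℂ)) - 1) n (2 * z) := by
  rw [besselQ, laguerre, Finset.mul_sum]
  refine Finset.sum_congr rfl fun l hl => ?_
  have hl : l ≤ n := Nat.lt_succ_iff.mp (Finset.mem_range.mp hl)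
  have hsign : (-1 : ℂ) ^ n * (-1) ^ (n - l) * (-1) ^ l = 1 := by
    rw [mul_assoc, ← pow_add, Nat.sub_add_cancel hl, ← pow_add, ← two_mul, pow_mul, neg_one_sq,
      one_pow]
  rw [choose_div_choose_two_mul hl, mul_comm ((n - l).factorial : ℂ), ← div_div,
    div_right_comm _ (l.factorial : ℂ), laguerre_coeff_neg_two_mul_sub_one hl, neg_pow (2 * z)]
  linear_combination
    (-((2 * n - l).choose (n - l) : ℂ) / ((2 * n).choose n : ℂ) * (2 * z) ^ l / (l.factorial : ℂ))
      * hsign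
end

section
/- For every n ∈ ℕ and every complex z, ∑_{k=0}^{n} L_k^{(-2k-1)}(z) · L_{n-k}^{(-2n+2k-1)}(-z) = (-4)ⁿ. -/
/-!
Write `g_k(x) = ∑_{j+m=k} C(2m+j, m) x^j / j!`. Evaluating the Pochhammer symbols at negative
integers gives `L_k^{(-2k-1)}(x) = (-1)^k g_k(x)`, so the claim is `∑_{k+l=n} g_k(z) g_l(-z) = 4^n`.
In generating-function terms `∑_m C(2m+a, m) t^m = B(t)^a / √(1-4t)` with `B` the Catalan series,
so `∑_k g_k(x) t^k = e^{x t B(t)} / √(1-4t)` and the product of the series at `z` and `-z` is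
`1/(1-4t)`. The proof uses the finite counterparts of these facts: the convolution of
`m ↦ C(2m+a, m)` with `m ↦ C(2m+b, m)` depends only on `a + b` (by Pascal's rule), the
convolution square of the central binomial coefficients is `4^q`, and after regrouping the
quadruple sum by `p = j + i` the binomial theorem leaves only the factor `(z + (-z))^p / p!`,
which vanishes unless `p = 0`.
-/

open Finset Nat

lemma two_mul_sum_antidiagonal_fst_mul {R : Type*} [CommSemiring R] (q : ℕ) (g : ℕ → ℕ → R)
    (hg : ∀ i j, g i j = g j i) :
    2 * ∑ x ∈ antidiagonal q, (x.1 : R) * g x.1 x.2 = q * ∑ x ∈ antidiagonal q, g x.1 x.2 := by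
  have hswap : ∑ x ∈ antidiagonal q, (x.1 : R) * g x.1 x.2 =
      ∑ x ∈ antidiagonal q, (x.2 : R) * g x.1 x.2 := by
    rw [← Nat.sum_antidiagonal_swap]
    simp only [Prod.fst_swap, Prod.snd_swap, hg]
  rw [two_mul]
  nth_rw 2 [hswap]
  rw [← sum_add_distrib, mul_sum]
  refine sum_congr rfl fun x hx => ?_
  rw [← add_mul, ← cast_add, mem_antidiagonal.mp hx]

lemma sum_antidiagonal_antidiagonal_interchange {M : Type*} [AddCommMonoid M] (n : ℕ)
    (f : ℕ → ℕ → ℕ → ℕ → M) :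
    ∑ kl ∈ antidiagonal n, ∑ jm ∈ antidiagonal kl.1, ∑ ir ∈ antidiagonal kl.2,
        f jm.1 jm.2 ir.1 ir.2 =
      ∑ pq ∈ antidiagonal n, ∑ ji ∈ antidiagonal pq.1, ∑ mr ∈ antidiagonal pq.2,
        f ji.1 mr.1 ji.2 mr.2 := by
  simp only [← sum_product', sum_sigma']
  refine sum_nbij' (fun ⟨_, (j, m), (i, r)⟩ => ⟨(j + i, m + r), (j, i), (m, r)⟩)
    (fun ⟨_, (j, i), (m, r)⟩ => ⟨(j + m, i + r), (j, m), (i, r)⟩) ?_ ?_ ?_ ?_ fun _ _ => rfl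
  all_goals
    rintro ⟨⟨k, l⟩, ⟨j, m⟩, ⟨i, r⟩⟩ hx
    simp only [HasAntidiagonal.mem_antidiagonal, mem_sigma, mem_product] at hx ⊢
    obtain ⟨rfl, rfl, rfl⟩ := hx
  · exact ⟨add_add_add_comm .., trivial, trivial⟩
  · exact ⟨add_add_add_comm .., trivial, trivial⟩
  · rfl
  · rfl

lemma add_pow_div_factorial {K : Type*} [Field K] [CharZero K] (x y : K) (p : ℕ) :
    (x + y) ^ p / p ! = ∑ ij ∈ antidiagonal p, x ^ ij.1 / ij.1 ! * (y ^ ij.2 / ij.2 !) := by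
  rw [(Commute.all x y).add_pow', sum_div]
  refine sum_congr rfl fun ij hij => ?_
  rw [← mem_antidiagonal.mp hij, nsmul_eq_mul, cast_add_choose]
  have := (ij.1 + ij.2).factorial_ne_zero
  field_simp

lemma sum_antidiagonal_centralBinom_mul_centralBinom (q : ℕ) :
    ∑ x ∈ antidiagonal q, centralBinom x.1 * centralBinom x.2 = 4 ^ q := by
  set S : ℕ → ℕ := fun q => ∑ x ∈ antidiagonal q, centralBinom x.1 * centralBinom x.2 with hS
  set W : ℕ → ℕ := fun q => ∑ x ∈ antidiagonal q, x.1 * (centralBinom x.1 * centralBinom x.2)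
    with hW
  have two_mul_W (q : ℕ) : 2 * W q = q * S q := by
    simpa using two_mul_sum_antidiagonal_fst_mul q (fun i j => centralBinom i * centralBinom j)
      fun i j => mul_comm _ _
  have W_succ (q : ℕ) : W (q + 1) = 4 * W q + 2 * S q := by
    simp only [hW, hS, Nat.sum_antidiagonal_succ, zero_mul, zero_add, ← mul_assoc,
      succ_mul_centralBinom_succ, mul_sum]
    rw [← sum_add_distrib]
    exact sum_congr rfl fun x _ => by ring
  show S q = 4 ^ q
  induction q with
  | zero => simp [hS]
  | succ q ih =>
    have h : (q + 1) * S (q + 1) = (q + 1) * (4 * S q) :=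
      calc (q + 1) * S (q + 1) = 2 * W (q + 1) := (two_mul_W _).symm
        _ = 4 * (2 * W q) + 4 * S q := by rw [W_succ]; ring
        _ = (q + 1) * (4 * S q) := by rw [two_mul_W]; ring
    rw [Nat.eq_of_mul_eq_mul_left q.succ_pos h, ih, pow_succ']

def shiftedCentralBinom (a m : ℕ) : ℕ := (2 * m + a).choose m

namespace shiftedCentralBinom

@[simp] lemma zero_right (a : ℕ) : shiftedCentralBinom a 0 = 1 := by simp [shiftedCentralBinom]

lemma succ_succ (a m : ℕ) :
    shiftedCentralBinom (a + 1) (m + 1) =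
      shiftedCentralBinom a (m + 1) + shiftedCentralBinom (a + 2) m := by
  simp only [shiftedCentralBinom]
  rw [show 2 * (m + 1) + (a + 1) = (2 * m + (a + 2)) + 1 by ring,
    show 2 * (m + 1) + a = 2 * m + (a + 2) by ring, choose_succ_succ', add_comm]

end shiftedCentralBinom

def shiftedCentralBinomConv (a b q : ℕ) : ℕ :=
  ∑ x ∈ antidiagonal q, shiftedCentralBinom a x.1 * shiftedCentralBinom b x.2

namespace shiftedCentralBinomConv

lemma comm (a b q : ℕ) : shiftedCentralBinomConv a b q = shiftedCentralBinomConv b a q := by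
  rw [shiftedCentralBinomConv, ← Nat.sum_antidiagonal_swap]
  simp only [shiftedCentralBinomConv, Prod.fst_swap, Prod.snd_swap, mul_comm]

lemma succ_left_succ (a b q : ℕ) :
    shiftedCentralBinomConv (a + 1) b (q + 1) =
      shiftedCentralBinomConv a b (q + 1) + shiftedCentralBinomConv (a + 2) b q := by
  simp only [shiftedCentralBinomConv, Nat.sum_antidiagonal_succ, shiftedCentralBinom.zero_right,
    shiftedCentralBinom.succ_succ, add_mul, sum_add_distrib]
  ring

lemma succ_left (q : ℕ) : ∀ a b,
    shiftedCentralBinomConv (a + 1) b q = shiftedCentralBinomConv a (b + 1) q := by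
  induction q with
  | zero => simp [shiftedCentralBinomConv]
  | succ q ih =>
    intro a b
    rw [succ_left_succ, comm a (b + 1), succ_left_succ, ih (a + 1) b, ih a (b + 1), comm b a,
      comm (b + 2) a]

lemma eq_zero_add (a b q : ℕ) :
    shiftedCentralBinomConv a b q = shiftedCentralBinomConv 0 (a + b) q := by
  induction a generalizing b with
  | zero => rw [zero_add]
  | succ a ih => rw [succ_left, ih, add_right_comm, add_assoc]

lemma zero_zero (q : ℕ) : shiftedCentralBinomConv 0 0 q = 4 ^ q :=
  sum_antidiagonal_centralBinom_mul_centralBinom q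

end shiftedCentralBinomConv

-- `g_k(x)`: the coefficient of `t^k` in `e^{x t B(t)} / √(1-4t)`
noncomputable def centralBinomExpCoeff {K : Type*} [Field K] (k : ℕ) (x : K) : K :=
  ∑ jm ∈ antidiagonal k, (shiftedCentralBinom jm.1 jm.2 : K) * x ^ jm.1 / jm.1 !

lemma sum_antidiagonal_centralBinomExpCoeff_mul {K : Type*} [Field K] [CharZero K] (x y : K)
    (n : ℕ) :
    ∑ kl ∈ antidiagonal n, centralBinomExpCoeff kl.1 x * centralBinomExpCoeff kl.2 y =
      ∑ pq ∈ antidiagonal n, (x + y) ^ pq.1 / pq.1 ! * shiftedCentralBinomConv 0 pq.1 pq.2 := by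
  simp only [centralBinomExpCoeff, sum_mul_sum]
  rw [sum_antidiagonal_antidiagonal_interchange n fun j m i r =>
    (shiftedCentralBinom j m : K) * x ^ j / j ! * ((shiftedCentralBinom i r : K) * y ^ i / i !)]
  refine sum_congr rfl fun pq _ => ?_
  rw [add_pow_div_factorial, sum_mul]
  refine sum_congr rfl fun ji hji => ?_
  rw [← mem_antidiagonal.mp hji, ← shiftedCentralBinomConv.eq_zero_add, shiftedCentralBinomConv,
    cast_sum, mul_sum]
  refine sum_congr rfl fun _ _ => ?_
  push_cast
  ring

lemma sum_antidiagonal_centralBinomExpCoeff_mul_neg {K : Type*} [Field K] [CharZero K] (x : K)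
    (n : ℕ) :
    ∑ kl ∈ antidiagonal n, centralBinomExpCoeff kl.1 x * centralBinomExpCoeff kl.2 (-x) =
      4 ^ n := by
  rw [sum_antidiagonal_centralBinomExpCoeff_mul, add_neg_cancel,
    sum_eq_single_of_mem (0, n) (by simp)]
  · simp [shiftedCentralBinomConv.zero_zero]
  · rintro ⟨p, q⟩ hpq hne
    have hp : p ≠ 0 := by
      rintro rfl
      simp_all
    simp [zero_pow hp]

lemma poch_neg_natCast_s14 (N d : ℕ) : poch (-(N : ℂ)) d = (-1) ^ d * N.descFactorial d := by
  have h := prod_neg (s := range d) fun i => (N : ℂ) - i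
  rw [card_range] at h
  rw [← descPochhammer_eval_eq_descFactorial, descPochhammer_eval_eq_prod_range, poch, ← h]
  exact prod_congr rfl fun i _ => by ring

lemma laguerre_neg_two_mul_sub_one (k : ℕ) (x : ℂ) :
    laguerre (-(2 * (k : ℂ)) - 1) k x = (-1) ^ k * centralBinomExpCoeff k x := by
  rw [laguerre, centralBinomExpCoeff, Nat.sum_antidiagonal_eq_sum_range_succ_mk, mul_sum]
  refine sum_congr rfl fun j hj => ?_
  have hjk : j ≤ k := Nat.lt_succ_iff.mp (mem_range.mp hj)
  have hα : -(2 * (k : ℂ)) - 1 + j + 1 = -((2 * k - j : ℕ) : ℂ) := by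
    push_cast [Nat.cast_sub (by omega : j ≤ 2 * k)]
    ring
  have hsign : (-1 : ℂ) ^ k = (-1) ^ (k - j) * (-1) ^ j := by
    rw [← pow_add, Nat.sub_add_cancel hjk]
  rw [hα, poch_neg_natCast_s14, descFactorial_eq_factorial_mul_choose, shiftedCentralBinom,
    show 2 * (k - j) + j = 2 * k - j by omega, neg_pow x, hsign]
  have := (k - j).factorial_ne_zero
  have := j.factorial_ne_zero
  push_cast
  field_simp

theorem stmt_14 (n : ℕ) (z : ℂ) :
    ∑ k ∈ Finset.range (n + 1),
      laguerre (-(2 * (k : ℂ)) - 1) k z *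
        laguerre (-(2 * (n : ℂ)) + 2 * (k : ℂ) - 1) (n - k) (-z) = (-4 : ℂ) ^ n := by
  have hterm : ∀ k ∈ range (n + 1),
      laguerre (-(2 * (k : ℂ)) - 1) k z * laguerre (-(2 * (n : ℂ)) + 2 * (k : ℂ) - 1) (n - k) (-z) =
        (-1) ^ n * (centralBinomExpCoeff k z * centralBinomExpCoeff (n - k) (-z)) := by
    intro k hk
    have hkn : k ≤ n := Nat.lt_succ_iff.mp (mem_range.mp hk)
    have hα : -(2 * (n : ℂ)) + 2 * (k : ℂ) - 1 = -(2 * ((n - k : ℕ) : ℂ)) - 1 := by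
      push_cast [Nat.cast_sub hkn]
      ring
    have hsign : (-1 : ℂ) ^ n = (-1) ^ k * (-1) ^ (n - k) := by
      rw [← pow_add, Nat.add_sub_cancel' hkn]
    rw [hα, laguerre_neg_two_mul_sub_one, laguerre_neg_two_mul_sub_one, hsign]
    ring
  rw [sum_congr rfl hterm, ← mul_sum, ← Nat.sum_antidiagonal_eq_sum_range_succ
    (fun k l => centralBinomExpCoeff k z * centralBinomExpCoeff l (-z)),
    sum_antidiagonal_centralBinomExpCoeff_mul_neg, ← mul_pow]
  norm_num
end
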